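/- For all nonnegative integers a, b, the polynomial identity (x₂−x₁)(x₂−x₃)·(w_a(x₁,x₂)+2w_a(x₂,x₃))·(w_b(x₁,x₂)+2w_b(x₂,x₃)) = 2·(x₁^a − x₃^a)(x₃^b − x₁^b) + r₂·[ 2(x₂−x₁)·w_a(x₁,x₂)·w_b(x₁,x₂) + 4(x₂−x₃)·w_a(x₂,x₃)·w_b(x₂,x₃) ] holds in ℚ[x₁,x₂,x₃], where r₂ := (x₂−x₁) + (x₂−x₃)/2. -/
import Mathlib


/-- `w_a(u,v) := Σ_{p+q=a−1, p,q≥0} u^p v^q`. -/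
def wPair {R : Type*} [CommRing R] (a : ℕ) (u v : R) : R :=
  ∑ p ∈ Finset.range a, u ^ p * v ^ (a - 1 - p)

lemma wPair_mul {R : Type*} [CommRing R] (a : ℕ) (u v : R) :
    wPair a u v * (u - v) = u ^ a - v ^ a := geom_sum₂_mul u v a

/-- Decomposition (dec4) of the paper, as a polynomial identity over `ℚ`
(with `r₂ := (x₂−x₁) + (x₂−x₃)/2`). -/
theorem stmt10 (a b : ℕ) (x₁ x₂ x₃ : ℚ) :
    (x₂ - x₁) * (x₂ - x₃) * (wPair a x₁ x₂ + 2 * wPair a x₂ x₃) *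
        (wPair b x₁ x₂ + 2 * wPair b x₂ x₃) =
      2 * ((x₁ ^ a - x₃ ^ a) * (x₃ ^ b - x₁ ^ b))
        + ((x₂ - x₁) + (x₂ - x₃) / 2) *
          (2 * (x₂ - x₁) * wPair a x₁ x₂ * wPair b x₁ x₂
            + 4 * (x₂ - x₃) * wPair a x₂ x₃ * wPair b x₂ x₃) := by
  have ha1 := wPair_mul a x₁ x₂
  have ha2 := wPair_mul a x₂ x₃
  have hb1 := wPair_mul b x₁ x₂
  have hb2 := wPair_mul b x₂ x₃
  set A1 := wPair a x₁ x₂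
  set A2 := wPair a x₂ x₃
  set B1 := wPair b x₁ x₂
  set B2 := wPair b x₂ x₃
  have e1 : x₁ ^ a = x₂ ^ a + A1 * (x₁ - x₂) := by linear_combination -ha1
  have e3 : x₃ ^ a = x₂ ^ a - A2 * (x₂ - x₃) := by linear_combination ha2
  have f1 : x₁ ^ b = x₂ ^ b + B1 * (x₁ - x₂) := by linear_combination -hb1
  have f3 : x₃ ^ b = x₂ ^ b - B2 * (x₂ - x₃) := by linear_combination hb2
  rw [e1, e3, f1, f3]
  ring
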